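/- Define learning rates α_t = (H+1)/(H+t) for t ≥ 1, and weights α_t^i = α_i · ∏_{j=i+1}^t (1 − α_j) for 1 ≤ i ≤ t. Then for every t ≥ 1: 1/t ≤ ∑_{i=1}^t α_t^i/i ≤ 2/t. -/

import Mathlib

/-- Learning rate `α_t = (H+1)/(H+t)`. -/
noncomputable def lr (H t : ℕ) : ℝ := (H + 1) / (H + t)

/-- Weight `α_t^i = α_i ∏_{j=i+1}^t (1 - α_j)`. -/
noncomputable def lrW (H t i : ℕ) : ℝ :=
  lr H i * ∏ j ∈ Finset.Icc (i + 1) t, (1 - lr H j)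

/-!
Write `S_t = ∑_{i ≤ t} α_t^i / i`. Since `α_{t+1}^i = (1 - α_{t+1}) α_t^i` for `i ≤ t` and
`α_{t+1}^{t+1} = α_{t+1}`, the sums satisfy `S_{t+1} = (1 - α_{t+1}) S_t + α_{t+1}/(t+1)`, a convex
combination, with `S_1 = 1`. Both bounds then follow by induction: `1/t ≥ 1/(t+1)` gives the lower
one, and with `1 - α_{t+1} = t/(H+t+1)` the upper one reduces to `H ≥ 1`.
-/

open Finset

noncomputable def lrWeightedSum (H t : ℕ) : ℝ := ∑ i ∈ Icc 1 t, lrW H t i / i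

lemma lr_one (H : ℕ) : lr H 1 = 1 := by
  rw [lr, Nat.cast_one]
  exact div_self (by positivity)

lemma one_sub_lr_succ (H t : ℕ) : 1 - lr H (t + 1) = t / (H + t + 1) := by
  rw [lr, Nat.cast_succ, ← add_assoc]
  field_simp
  ring

lemma one_sub_lr_succ_nonneg (H t : ℕ) : 0 ≤ 1 - lr H (t + 1) :=
  one_sub_lr_succ H t ▸ by positivity

lemma lrW_self (H t : ℕ) : lrW H t t = lr H t := by
  simp [lrW]

lemma lrW_succ {H t i : ℕ} (hi : i ≤ t) :
    lrW H (t + 1) i = (1 - lr H (t + 1)) * lrW H t i := by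
  rw [lrW, lrW, prod_Icc_succ_top (by omega)]
  ring

lemma lrWeightedSum_one (H : ℕ) : lrWeightedSum H 1 = 1 := by
  simp [lrWeightedSum, lrW_self, lr_one]

lemma lrWeightedSum_succ (H t : ℕ) :
    lrWeightedSum H (t + 1) = (1 - lr H (t + 1)) * lrWeightedSum H t + lr H (t + 1) / (t + 1) := by
  rw [lrWeightedSum, sum_Icc_succ_top (by omega), lrW_self, lrWeightedSum, mul_sum,
    sum_congr rfl fun i hi => by rw [lrW_succ (mem_Icc.mp hi).2, mul_div_assoc]]
  push_cast
  rfl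

lemma one_div_le_lrWeightedSum (H : ℕ) {t : ℕ} (ht : 1 ≤ t) :
    1 / (t : ℝ) ≤ lrWeightedSum H t := by
  induction t, ht using Nat.le_induction with
  | base => simp [lrWeightedSum_one]
  | succ t ht ih =>
    have ht' : (0 : ℝ) < t := by exact_mod_cast ht
    have hdecr : 1 / ((t : ℝ) + 1) ≤ 1 / t := one_div_le_one_div_of_le ht' (by linarith)
    rw [lrWeightedSum_succ, Nat.cast_succ]
    calc 1 / ((t : ℝ) + 1)
        = (1 - lr H (t + 1)) * (1 / ((t : ℝ) + 1)) + lr H (t + 1) / (t + 1) := by ring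
      _ ≤ (1 - lr H (t + 1)) * lrWeightedSum H t + lr H (t + 1) / (t + 1) := by
        gcongr
        · exact one_sub_lr_succ_nonneg H t
        · exact ih.trans' hdecr

lemma lrWeightedSum_le_two_div {H : ℕ} (hH : 1 ≤ H) {t : ℕ} (ht : 1 ≤ t) :
    lrWeightedSum H t ≤ 2 / (t : ℝ) := by
  induction t, ht using Nat.le_induction with
  | base => norm_num [lrWeightedSum_one]
  | succ t ht ih =>
    have ht' : (0 : ℝ) < t := by exact_mod_cast ht
    have hH' : (1 : ℝ) ≤ H := by exact_mod_cast hH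
    rw [lrWeightedSum_succ, Nat.cast_succ]
    calc (1 - lr H (t + 1)) * lrWeightedSum H t + lr H (t + 1) / (t + 1)
        ≤ (1 - lr H (t + 1)) * (2 / t) + lr H (t + 1) / (t + 1) := by
          gcongr
          exact one_sub_lr_succ_nonneg H t
      _ = (2 * t + H + 3) / ((H + t + 1) * (t + 1)) := by
          rw [one_sub_lr_succ, lr, Nat.cast_succ]
          field_simp
          ring
      _ ≤ 2 / ((t : ℝ) + 1) := by
          rw [div_le_div_iff₀ (by positivity) (by positivity)]
          nlinarith

theorem stmt4 (H : ℕ) (hH : 1 ≤ H) (t : ℕ) (ht : 1 ≤ t) :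
    1 / (t : ℝ) ≤ ∑ i ∈ Finset.Icc 1 t, lrW H t i / i ∧
    ∑ i ∈ Finset.Icc 1 t, lrW H t i / i ≤ 2 / (t : ℝ) :=
  ⟨one_div_le_lrWeightedSum H ht, lrWeightedSum_le_two_div hH ht⟩
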